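/- There are no self-dual modern-and-synchronized Tamari intervals of even size, and for k ≥ 0 the number of self-dual Tamari intervals of size 2k+1 that are both modern and synchronized equals the Catalan number (1/(k+1)) · C(2k, k). -/

import Mathlib

/-- Binary trees: a leaf or a binary node with two subtrees. -/
inductive BT : Type
  | leaf : BT
  | node : BT → BT → BT

namespace BT

/-- Number of binary (internal) nodes. -/
def size : BT → ℕ
  | leaf => 0
  | node l r => l.size + r.size + 1

/-- One right rotation somewhere in the tree: ((A,B),C) ↦ (A,(B,C)). -/
inductive Rot : BT → BT → Prop
  | rotate (A B C : BT) : Rot (node (node A B) C) (node A (node B C))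
  | left {l l' : BT} (r : BT) : Rot l l' → Rot (node l r) (node l' r)
  | right (l : BT) {r r' : BT} : Rot r r' → Rot (node l r) (node l r')

/-- Tamari order: reflexive-transitive closure of right rotation. -/
def tle (T T' : BT) : Prop := Relation.ReflTransGen Rot T T'

/-- Bracket-vector: sizes of right subtrees of nodes, in infix order. -/
def bracket : BT → List ℕ
  | leaf => []
  | node l r => bracket l ++ r.size :: bracket r

/-- Dual bracket-vector: sizes of left subtrees of nodes, in infix order. -/
def dualBracket : BT → List ℕ
  | leaf => []
  | node l r => dualBracket l ++ l.size :: dualBracket r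

/-- Canopy word: for each leaf (left to right), 1 if it is a left child, 0 if a right child;
the argument `b` is the value assigned to the tree if it is itself a leaf. -/
def canopyAux (b : ℕ) : BT → List ℕ
  | leaf => [b]
  | node l r => canopyAux 1 l ++ canopyAux 0 r

/-- Canopy-vector of a binary tree. -/
def canopy (T : BT) : List ℕ := canopyAux 1 T

/-- Left-right mirror. -/
def mir : BT → BT
  | leaf => leaf
  | node l r => node (mir r) (mir l)

/-- Tamari interval of size n. -/
def interval (p : BT × BT) (n : ℕ) : Prop :=
  p.1.size = n ∧ p.2.size = n ∧ tle p.1 p.2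

/-- Tamari interval (of unspecified size). -/
def isInt (p : BT × BT) : Prop := p.1.size = p.2.size ∧ tle p.1 p.2

/-- The rise operation (T,T') ↦ ((T,ε),(ε,T')). -/
def riseF (p : BT × BT) : BT × BT := (node p.1 leaf, node leaf p.2)

/-- An interval is modern when its rise is again an interval. -/
def modern (p : BT × BT) : Prop := tle (node p.1 leaf) (node leaf p.2)

/-- Infinitely modern: every iterated rise is an interval. -/
def infModern (p : BT × BT) : Prop :=
  ∀ k : ℕ, tle ((riseF^[k] p).1) ((riseF^[k] p).2)

/-- Synchronized: equal canopies. -/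
def synced (p : BT × BT) : Prop := canopy p.1 = canopy p.2

/-- Self-dual: equal to its dual (mir T', mir T). -/
def selfDual (p : BT × BT) : Prop := mir p.2 = p.1 ∧ mir p.1 = p.2

/-- Number of positions where the two canopies agree. -/
def agreeCount (p : BT × BT) : ℕ :=
  ((List.range (p.1.size + 1)).filter
    (fun i => (canopy p.1).getD i 0 == (canopy p.2).getD i 0)).length

/-- Number of canopy positions of joint type (a on top, b on bottom), for an interval (T,T')
with T' the upper tree. -/
def typeCount (a b : ℕ) (p : BT × BT) : ℕ :=
  ((List.range (p.1.size + 1)).filter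
    (fun i => ((canopy p.2).getD i 0 == a) && ((canopy p.1).getD i 0 == b))).length

end BT

/-!
Let `(T, T')` be such an interval, so `T' = mir T`. Canopies grow pointwise along the Tamari order,
so modernity `(T, ε) ≤ (ε, T')` and synchronization give `canopy T ++ [0] ≤ 1 :: canopy T`: the
canopy of `T` has no factor `01`. This forces `T` to be a snake, a path in which every node has a
leaf child, encoded by a word `w` in `U`, `D`; then `T'` is the snake of the swapped word, and
synchronization says that `w` has as many `U`s as `D`s, so `T` has odd size `|w| + 1`. Comparing
the bracket vectors of `T ≤ T'` yields the ballot condition, so `w` is a Dyck word. Conversely,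
explicit rotation sequences show that every Dyck word gives such an interval, so the intervals of
size `2k + 1` are counted by Dyck words of semilength `k`, i.e. by the Catalan number.
-/

open DyckStep (U D)

namespace List

theorem Forall₂.le_trans {α : Type*} [Preorder α] {l₁ l₂ l₃ : List α}
    (h₁₂ : Forall₂ (· ≤ ·) l₁ l₂) (h₂₃ : Forall₂ (· ≤ ·) l₂ l₃) :
    Forall₂ (· ≤ ·) l₁ l₃ := by
  induction h₁₂ generalizing l₃ with
  | nil => exact h₂₃
  | cons hab _ ih =>
    cases h₂₃ with
    | cons hbc h => exact .cons (hab.trans hbc) (ih h)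

theorem Forall₂.getD_le {α : Type*} [Preorder α] {l₁ l₂ : List α}
    (h : Forall₂ (· ≤ ·) l₁ l₂) (d : α) (i : ℕ) : l₁.getD i d ≤ l₂.getD i d := by
  induction h generalizing i with
  | nil => exact le_rfl
  | cons hab _ ih => cases i with
    | zero => exact hab
    | succ i => exact ih i

theorem getD_concat_default {α : Type*} (l : List α) (d : α) (i : ℕ) :
    (l ++ [d]).getD i d = l.getD i d := by
  grind

end List

namespace DyckStep

def swap : DyckStep → DyckStep
  | U => D
  | D => U

@[simp] lemma swap_U : swap U = D := rfl
@[simp] lemma swap_D : swap D = U := rfl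
@[simp] lemma swap_swap (s : DyckStep) : swap (swap s) = s := by cases s <;> rfl

lemma count_U_add_count_D (w : List DyckStep) : w.count U + w.count D = w.length := by
  induction w with
  | nil => rfl
  | cons x w ih =>
    cases x <;> simp only [List.count_cons_self, List.count_cons_of_ne, ne_eq, reduceCtorEq,
      not_false_eq_true, List.length_cons] <;> omega

lemma count_map_swap (w : List DyckStep) (s : DyckStep) :
    (w.map swap).count s = w.count (swap s) := by
  simpa using
    List.count_map_of_injective w swap (Function.LeftInverse.injective swap_swap) (swap s)

end DyckStep

open DyckStep (swap)

namespace DyckWord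

lemma toList_nest_add (p q : DyckWord) :
    (p.nest + q).toList = U :: p.toList ++ D :: q.toList := by
  change ([U] ++ _ ++ [D]) ++ _ = _
  simp

@[elab_as_elim]
lemma nest_add_induction {P : DyckWord → Prop} (zero : P 0)
    (nest_add : ∀ p q : DyckWord, P p → P q → P (p.nest + q)) (p : DyckWord) : P p := by
  rw [← ofTree_toTree p]
  induction p.toTree with
  | nil => exact zero
  | node _ l r ihl ihr => exact nest_add _ _ ihl ihr

lemma ncard_setOf_semilength_eq (n : ℕ) :
    {p : DyckWord | p.semilength = n}.ncard = catalan n := by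
  rw [← Nat.card_coe_set_eq]
  exact (Nat.card_eq_fintype_card (α := {p : DyckWord // p.semilength = n})).trans
    (card_dyckWord_semilength_eq_catalan n)

end DyckWord

namespace BT

lemma canopyAux_node (b : ℕ) (l r : BT) :
    canopyAux b (node l r) = canopyAux 1 l ++ canopyAux 0 r := rfl

lemma canopyAux_zero_le_one (T : BT) :
    List.Forall₂ (· ≤ ·) (canopyAux 0 T) (canopyAux 1 T) := by
  cases T with
  | leaf => simp [canopyAux]
  | node l r => exact List.forall₂_refl _

lemma Rot.canopyAux_le {T T' : BT} (h : Rot T T') (b : ℕ) :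
    List.Forall₂ (· ≤ ·) (canopyAux b T) (canopyAux b T') := by
  induction h generalizing b with
  | rotate A B C =>
    simp only [canopyAux_node, List.append_assoc]
    exact List.rel_append (List.forall₂_refl _)
      (List.rel_append (canopyAux_zero_le_one B) (List.forall₂_refl _))
  | left r _ ih => exact List.rel_append (ih 1) (List.forall₂_refl _)
  | right l _ ih => exact List.rel_append (List.forall₂_refl _) (ih 0)

lemma canopy_le_of_tle {T T' : BT} (h : tle T T') :
    List.Forall₂ (· ≤ ·) (canopy T) (canopy T') := by
  induction h with
  | refl => exact List.forall₂_refl _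
  | tail _ hrot ih => exact ih.le_trans (hrot.canopyAux_le 1)

lemma canopy_concat_le_of_modern {p : BT × BT} (h : modern p) :
    List.Forall₂ (· ≤ ·) (canopy p.1 ++ [0]) (1 :: canopy p.2) :=
  (canopy_le_of_tle h).le_trans (.cons le_rfl (canopyAux_zero_le_one p.2))

lemma not_infix_of_concat_le {l : List ℕ} (h : List.Forall₂ (· ≤ ·) (l ++ [0]) (1 :: l)) :
    ¬ [0, 1] <:+: l := by
  rintro ⟨s, t, rfl⟩
  have := h.getD_le 0 (s.length + 1)
  simp at this

lemma exists_canopyAux_one_eq_cons (T : BT) : ∃ s, canopyAux 1 T = 1 :: s := by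
  induction T with
  | leaf => exact ⟨[], rfl⟩
  | node l r ihl _ =>
    obtain ⟨s, hs⟩ := ihl
    exact ⟨s ++ canopyAux 0 r, by rw [canopyAux_node, hs, List.cons_append]⟩

lemma exists_canopyAux_zero_eq_concat (T : BT) : ∃ s, canopyAux 0 T = s ++ [0] := by
  induction T with
  | leaf => exact ⟨[], rfl⟩
  | node l r _ ihr =>
    obtain ⟨s, hs⟩ := ihr
    exact ⟨canopyAux 1 l ++ s, by rw [canopyAux_node, hs, List.append_assoc]⟩

/-- `snakeOn w C` reads `w` from the root down: `U` is a node whose right child is a leaf, `D` a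
node whose left child is a leaf; the path ends in the core `C`. -/
def snakeOn : List DyckStep → BT → BT
  | [], C => C
  | U :: w, C => node (snakeOn w C) leaf
  | D :: w, C => node leaf (snakeOn w C)

def snake (w : List DyckStep) : BT := snakeOn w (node leaf leaf)

@[simp] lemma snake_nil : snake [] = node leaf leaf := rfl
@[simp] lemma snake_cons_U (w : List DyckStep) : snake (U :: w) = node (snake w) leaf := rfl
@[simp] lemma snake_cons_D (w : List DyckStep) : snake (D :: w) = node leaf (snake w) := rfl

lemma snakeOn_append (u v : List DyckStep) (C : BT) :
    snakeOn (u ++ v) C = snakeOn u (snakeOn v C) := by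
  induction u with
  | nil => rfl
  | cons x u ih => cases x <;> simp [snakeOn, ih]

lemma snake_append (u v : List DyckStep) : snake (u ++ v) = snakeOn u (snake v) :=
  snakeOn_append u v _

lemma size_snakeOn (w : List DyckStep) (C : BT) : (snakeOn w C).size = w.length + C.size := by
  induction w with
  | nil => simp [snakeOn]
  | cons x w ih => cases x <;> simp only [snakeOn, size, ih, List.length_cons] <;> omega

lemma size_snake (w : List DyckStep) : (snake w).size = w.length + 1 :=
  size_snakeOn w _

lemma mir_snakeOn (w : List DyckStep) (C : BT) :
    mir (snakeOn w C) = snakeOn (w.map swap) (mir C) := by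
  induction w with
  | nil => rfl
  | cons x w ih => cases x <;> simp [snakeOn, mir, ih]

lemma mir_snake (w : List DyckStep) : mir (snake w) = snake (w.map swap) :=
  mir_snakeOn w _

lemma snake_ne_leaf (w : List DyckStep) : snake w ≠ leaf := by
  rcases w with _ | ⟨_ | _, w⟩ <;> simp

lemma snake_injective : Function.Injective snake := by
  intro w w' h
  induction w generalizing w' with
  | nil => rcases w' with _ | ⟨_ | _, w'⟩ <;> simp_all [(snake_ne_leaf _).symm]
  | cons x w ih =>
    rcases w' with _ | ⟨y, w'⟩
    · cases x <;> simp [snake_ne_leaf] at h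
    · cases x <;> cases y <;>
        simp only [snake_cons_U, snake_cons_D, node.injEq, snake_ne_leaf, (snake_ne_leaf _).symm,
          and_self, and_true, true_and, List.cons.injEq] at h ⊢ <;>
        exact ih h

lemma canopyAux_snake (b : ℕ) (w : List DyckStep) : canopyAux b (snake w) = canopy (snake w) := by
  rcases w with _ | ⟨_ | _, w⟩ <;> rfl

lemma canopy_snake (w : List DyckStep) :
    canopy (snake w) = List.replicate (w.count D + 1) 1 ++ List.replicate (w.count U + 1) 0 := by
  induction w with
  | nil => rfl
  | cons x w ih =>
    cases x
    · change canopy (snake w) ++ [0] = _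
      simp [ih, List.replicate_succ']
    · change 1 :: canopyAux 0 (snake w) = _
      simp [canopyAux_snake, ih, List.replicate_succ]

lemma exists_eq_snake_of_not_infix_canopy {T : BT} (hT : T ≠ leaf)
    (h : ¬ [0, 1] <:+: canopy T) : ∃ w, T = snake w := by
  induction T with
  | leaf => exact absurd rfl hT
  | node l r ihl ihr =>
    cases l with
    | leaf =>
      cases r with
      | leaf => exact ⟨[], rfl⟩
      | node r₁ r₂ =>
        obtain ⟨w, hw⟩ := ihr (by simp) fun hr => h (hr.trans (List.suffix_cons 1 _).isInfix)
        exact ⟨D :: w, by simp [hw]⟩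
    | node l₁ l₂ =>
      cases r with
      | leaf =>
        obtain ⟨w, hw⟩ :=
          ihl (by simp) fun hl => h (hl.trans (List.prefix_append _ [0]).isInfix)
        exact ⟨U :: w, by simp [hw]⟩
      | node r₁ r₂ =>
        obtain ⟨s, hs⟩ := exists_canopyAux_zero_eq_concat (node l₁ l₂)
        obtain ⟨t, ht⟩ := exists_canopyAux_one_eq_cons (node r₁ r₂)
        refine absurd ⟨s, t, ?_⟩ h
        show _ = canopyAux 0 (node l₁ l₂) ++ canopyAux 1 (node r₁ r₂)
        simp [hs, ht]

lemma tle_node_left {l l' : BT} (r : BT) (h : tle l l') : tle (node l r) (node l' r) :=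
  h.lift (fun x => node x r) fun _ _ => Rot.left r

lemma tle_node_right (l : BT) {r r' : BT} (h : tle r r') : tle (node l r) (node l r') :=
  h.lift (node l) fun _ _ => Rot.right l

lemma tle_snakeOn (w : List DyckStep) {C C' : BT} (h : tle C C') :
    tle (snakeOn w C) (snakeOn w C') := by
  induction w with
  | nil => exact h
  | cons x w ih =>
    cases x
    · exact tle_node_left leaf ih
    · exact tle_node_right leaf ih

lemma modern_snakeOn {E F : BT} (w : List DyckStep) (h : modern (E, F)) :
    modern (snakeOn w (node E leaf), snakeOn w (node F leaf)) := by
  induction w with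
  | nil => exact (tle_node_left leaf h).tail (Rot.rotate leaf F leaf)
  | cons x w ih =>
    cases x
    · exact (tle_node_left leaf ih).tail (Rot.rotate leaf _ leaf)
    · exact .head (Rot.rotate leaf _ leaf) (tle_node_right leaf ih)

lemma modern_snakeOn_dyckWord (p : DyckWord) (T : BT) :
    modern (snakeOn p (node leaf T), snakeOn (p.toList.map swap) (node T leaf)) := by
  induction p using DyckWord.nest_add_induction generalizing T with
  | zero => exact .single (Rot.rotate leaf T leaf)
  | nest_add p q ihp ihq =>
    simp only [DyckWord.toList_nest_add, List.cons_append, List.map_cons, List.map_append,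
      DyckStep.swap_U, DyckStep.swap_D, snakeOn, snakeOn_append]
    exact (tle_node_left leaf (ihp _)).trans <| .head (Rot.rotate leaf _ leaf) <|
      tle_node_right leaf (modern_snakeOn _ (ihq T))

lemma modern_snake_dyckWord (p : DyckWord) : modern (snake p, snake (p.toList.map swap)) :=
  modern_snakeOn_dyckWord p leaf

lemma tle_snake_dyckWord (p : DyckWord) : tle (snake p) (snake (p.toList.map swap)) := by
  induction p using DyckWord.nest_add_induction with
  | zero => exact .refl
  | nest_add p q _ ihq =>
    simp only [DyckWord.toList_nest_add, List.cons_append, List.map_cons, List.map_append,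
      DyckStep.swap_U, DyckStep.swap_D, snake_cons_U, snake_cons_D, snake_append]
    exact (tle_node_left leaf (tle_snakeOn p (tle_node_right leaf ihq))).trans
      (modern_snakeOn_dyckWord p _)

lemma Rot.size_eq {T T' : BT} (h : Rot T T') : T.size = T'.size := by
  induction h with
  | rotate A B C => simp only [size]; omega
  | left r _ ih => simp only [size, ih]
  | right l _ ih => simp only [size, ih]

lemma Rot.bracket_le {T T' : BT} (h : Rot T T') :
    List.Forall₂ (· ≤ ·) (bracket T) (bracket T') := by
  induction h with
  | rotate A B C =>
    simp only [bracket, size, List.append_assoc, List.cons_append]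
    exact List.rel_append (List.forall₂_refl _) (.cons (by omega) (List.forall₂_refl _))
  | left r _ ih => exact List.rel_append ih (List.forall₂_refl _)
  | right l h ih => exact List.rel_append (List.forall₂_refl _) (.cons h.size_eq.le ih)

lemma bracket_le_of_tle {T T' : BT} (h : tle T T') :
    List.Forall₂ (· ≤ ·) (bracket T) (bracket T') := by
  induction h with
  | refl => exact List.forall₂_refl _
  | tail _ hrot ih => exact ih.le_trans hrot.bracket_le

lemma lt_size_of_mem_bracket {T : BT} {x : ℕ} (hx : x ∈ bracket T) : x < T.size := by
  induction T with
  | leaf => simp [bracket] at hx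
  | node l r ihl ihr =>
    simp only [bracket, List.mem_append, List.mem_cons] at hx
    rcases hx with hx | rfl | hx
    · have := ihl hx; simp only [size]; omega
    · simp only [size]; omega
    · have := ihr hx; simp only [size]; omega

lemma getD_bracket_lt_size {T : BT} (hT : T ≠ leaf) (i : ℕ) :
    (bracket T).getD i 0 < T.size := by
  rcases lt_or_ge i (bracket T).length with hi | hi
  · rw [List.getD_eq_getElem _ _ hi]
    exact lt_size_of_mem_bracket (List.getElem_mem hi)
  · rw [List.getD_eq_default _ _ hi]
    cases T
    · exact absurd rfl hT
    · simp [size]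

lemma bracket_snake_cons_U (w : List DyckStep) :
    bracket (snake (U :: w)) = bracket (snake w) ++ [0] := rfl

lemma bracket_snake_cons_D (w : List DyckStep) :
    bracket (snake (D :: w)) = (w.length + 1) :: bracket (snake w) := by
  simp [bracket, size_snake]

/-- The bracket vector of `snake w` lists `|w| - i` for the positions `i` of the letters `D`, then
zeros; so the comparison with the swapped word, shifted by `d`, pits the `j`-th `D` against the
`(j - d)`-th `U`. -/
lemma count_take_le_of_bracket_snake_le (w : List DyckStep) (d : ℕ)
    (h : ∀ i, (bracket (snake w)).getD (i + d) 0 ≤ (bracket (snake (w.map swap))).getD i 0)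
    (i : ℕ) : (w.take i).count D ≤ (w.take i).count U + d := by
  induction w generalizing d i with
  | nil => simp
  | cons x w ih =>
    cases i with
    | zero => simp
    | succ i =>
    cases x
    · have := ih (d + 1) (fun j => by
        have := h (j + 1)
        rwa [List.map_cons, DyckStep.swap_U, bracket_snake_cons_U, bracket_snake_cons_D,
          List.getD_concat_default, List.getD_cons_succ, Nat.add_right_comm] at this) i
      simp only [List.take_succ_cons, List.count_cons_self, List.count_cons_of_ne, ne_eq,
        reduceCtorEq, not_false_eq_true]
      omega
    · cases d with
      | zero =>
        have := h 0
        rw [List.map_cons, DyckStep.swap_D, bracket_snake_cons_U, bracket_snake_cons_D,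
          List.getD_concat_default, Nat.zero_add, List.getD_cons_zero] at this
        have := getD_bracket_lt_size (snake_ne_leaf (w.map swap)) 0
        simp only [size_snake, List.length_map] at this
        omega
      | succ d =>
        have := ih d (fun j => by
          have := h j
          rwa [List.map_cons, DyckStep.swap_D, bracket_snake_cons_U, bracket_snake_cons_D,
            List.getD_concat_default, ← Nat.add_assoc, List.getD_cons_succ] at this) i
        simp only [List.take_succ_cons, List.count_cons_self, List.count_cons_of_ne, ne_eq,
          reduceCtorEq, not_false_eq_true]
        omega

lemma ne_leaf_of_size_ne_zero {T : BT} (h : T.size ≠ 0) : T ≠ leaf := by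
  rintro rfl
  exact h rfl

lemma exists_eq_snake_of_modern_synced_mir {p : BT × BT} (hp : p.1 ≠ leaf)
    (hm : modern p) (hs : synced p) (hd : mir p.1 = p.2) :
    ∃ w : List DyckStep, p = (snake w, snake (w.map swap)) ∧ w.count U = w.count D := by
  have hcan := canopy_concat_le_of_modern hm
  rw [← hs] at hcan
  obtain ⟨w, hw⟩ := exists_eq_snake_of_not_infix_canopy hp (not_infix_of_concat_le hcan)
  have hw' : p.2 = snake (w.map swap) := by rw [← hd, hw, mir_snake]
  refine ⟨w, Prod.ext hw hw', ?_⟩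
  have hones := congrArg (List.count 1) hs
  rw [hw, hw', canopy_snake, canopy_snake, DyckStep.count_map_swap, DyckStep.swap_D] at hones
  simpa [List.count_replicate] using hones.symm

lemma exists_dyckWord_of_tle_snake {w : List DyckStep} (hc : w.count U = w.count D)
    (h : tle (snake w) (snake (w.map swap))) : ∃ p : DyckWord, p.toList = w :=
  ⟨⟨w, hc, fun i => by
    simpa using count_take_le_of_bracket_snake_le w 0 ((bracket_le_of_tle h).getD_le 0) i⟩, rfl⟩

theorem setOf_interval_modern_synced_selfDual_eq_image (k : ℕ) :
    {p : BT × BT | interval p (2 * k + 1) ∧ modern p ∧ synced p ∧ selfDual p} =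
      (fun q : DyckWord => (snake q, snake (q.toList.map swap))) '' {q | q.semilength = k} := by
  ext p
  constructor
  · rintro ⟨⟨hsize, -, hle⟩, hm, hs, hd⟩
    obtain ⟨w, rfl, hc⟩ :=
      exists_eq_snake_of_modern_synced_mir (ne_leaf_of_size_ne_zero (by omega)) hm hs hd.2
    obtain ⟨q, rfl⟩ := exists_dyckWord_of_tle_snake hc hle
    have := q.two_mul_semilength_eq_length
    rw [size_snake] at hsize
    exact ⟨q, show q.semilength = k by omega, rfl⟩
  · rintro ⟨q, rfl, rfl⟩
    have hlen := q.two_mul_semilength_eq_length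
    refine ⟨⟨?_, ?_, tle_snake_dyckWord q⟩, modern_snake_dyckWord q, ?_, ?_, mir_snake _⟩
    · rw [size_snake, ← hlen]
    · rw [size_snake, List.length_map, ← hlen]
    · change canopy _ = canopy _
      rw [canopy_snake, canopy_snake, DyckStep.count_map_swap, DyckStep.count_map_swap,
        DyckStep.swap_U, DyckStep.swap_D, q.count_U_eq_count_D]
    · simp [mir_snake, Function.comp_def]

end BT

theorem count_self_dual_modern_synchronized_intervals (k : ℕ) :
    (1 ≤ k →
      {p : BT × BT | BT.interval p (2 * k) ∧ BT.modern p ∧ BT.synced p ∧ BT.selfDual p} =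
        (∅ : Set (BT × BT))) ∧
    (k + 1) *
        Set.ncard
          {p : BT × BT | BT.interval p (2 * k + 1) ∧ BT.modern p ∧ BT.synced p ∧ BT.selfDual p} =
      Nat.choose (2 * k) k := by
  refine ⟨fun hk => Set.eq_empty_of_forall_notMem ?_, ?_⟩
  · rintro p ⟨⟨hsize, -, -⟩, hm, hs, hd⟩
    obtain ⟨w, rfl, hc⟩ := BT.exists_eq_snake_of_modern_synced_mir
      (BT.ne_leaf_of_size_ne_zero (by omega)) hm hs hd.2
    have := DyckStep.count_U_add_count_D w
    rw [BT.size_snake] at hsize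
    omega
  · have hinj :
        Function.Injective fun q : DyckWord => (BT.snake q, BT.snake (q.toList.map swap)) :=
      fun p q h => DyckWord.ext (BT.snake_injective (congrArg Prod.fst h))
    rw [BT.setOf_interval_modern_synced_selfDual_eq_image, Set.ncard_image_of_injective _ hinj,
      DyckWord.ncard_setOf_semilength_eq, succ_mul_catalan_eq_centralBinom,
      Nat.centralBinom_eq_two_mul_choose]
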